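/- Let n, m ≥ 1, let a₁, …, a_m be real numbers, and let u₁, …, u_m, v be independent random vectors in ℝⁿ, each distributed as the standard n-dimensional Gaussian N(0, I_n). Define ψ(x, y) = (xᵀy)²/n − (xᵀx)(yᵀy)/n². Then E[ ( Σ_{i=1}^{m} aᵢ ψ(uᵢ, v) )² ] = (2(n−1)(n+2)/n²) Σ_{i=1}^{m} aᵢ². -/

import Mathlib

open MeasureTheory ProbabilityTheory Filter

/-- The standard Gaussian measure on `ℝⁿ`: the `n`-fold product of the standard
Gaussian measure on `ℝ`. -/
noncomputable def stdGaussian (n : ℕ) : Measure (Fin n → ℝ) :=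
  Measure.pi fun _ => gaussianReal 0 1

/-- `ψ(x, y) = (xᵀy)²/n − (xᵀx)(yᵀy)/n²`. -/
noncomputable def psi (n : ℕ) (x y : Fin n → ℝ) : ℝ :=
  (∑ i, x i * y i) ^ 2 / n - ((∑ i, x i * x i) * (∑ i, y i * y i)) / n ^ 2

/-!
For fixed `z`, `ψ(·, z)` is a centred quadratic form of a standard Gaussian vector `x`, with
`E_x[ψ(x, z)²] = 2(n - 1)/n³ ‖z‖⁴`. Both facts reduce to the mixed moments
`E[⟨y, x⟩ᵏ ‖x‖²ˡ]` for `k + 2l ≤ 4`, computed by induction on the dimension: splitting off the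
first coordinate of `x` expresses them through lower mixed moments and the one-dimensional
Gaussian moments `1, 0, 1, 0, 3`. Averaging over `v`, with `E‖v‖⁴ = n² + 2n`, gives
`E[ψ(uᵢ, v)²] = 2(n - 1)(n + 2)/n²`, while for `i ≠ j` the variables `ψ(uᵢ, v)` and `ψ(uⱼ, v)`
are conditionally independent and centred given `v`, so they are orthogonal. Expanding the
square finishes the proof.
-/

open Finset Matrix
open scoped NNReal

namespace ProbabilityTheory

lemma hasDerivAt_gaussianPDFReal (μ : ℝ) (v : ℝ≥0) (x : ℝ) :
    HasDerivAt (gaussianPDFReal μ v) (-((x - μ) / v) * gaussianPDFReal μ v x) x := by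
  have hq : HasDerivAt (fun y => -(y - μ) ^ 2 / (2 * v)) (-(2 * (x - μ)) / (2 * v)) x := by
    simpa using (((hasDerivAt_id x).sub_const μ).pow 2).neg.div_const (2 * (v : ℝ))
  refine (hq.exp.const_mul (√(2 * Real.pi * v))⁻¹).congr_deriv ?_
  simp only [gaussianPDFReal]
  by_cases hv : (v : ℝ) = 0
  · simp [hv]
  · field_simp

lemma integrable_gaussianReal_iff {μ : ℝ} {v : ℝ≥0} (hv : v ≠ 0) {f : ℝ → ℝ} :
    Integrable f (gaussianReal μ v) ↔ Integrable (fun x => gaussianPDFReal μ v x * f x) := by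
  rw [gaussianReal_of_var_ne_zero _ hv, integrable_withDensity_iff_integrable_smul'
    (measurable_gaussianPDF _ _) (ae_of_all _ fun _ => gaussianPDF_lt_top)]
  simp [toReal_gaussianPDF]

lemma integrable_pow_gaussianReal (μ : ℝ) (v : ℝ≥0) (k : ℕ) :
    Integrable (fun x => x ^ k) (gaussianReal μ v) := by
  refine (integrable_norm_iff (by fun_prop)).mp ?_
  simpa [norm_pow] using (memLp_id_gaussianReal (μ := μ) (v := v) k).integrable_norm_pow'

/-- Stein's identity for `x ^ (k + 1)`: integrate `(x ^ (k + 1) φ)'` using `φ' = -x φ`. -/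
lemma integral_pow_add_two_gaussianReal (k : ℕ) :
    ∫ x, x ^ (k + 2) ∂gaussianReal 0 1 = (k + 1) * ∫ x, x ^ k ∂gaussianReal 0 1 := by
  have hint : ∀ j : ℕ, Integrable (fun x => gaussianPDFReal 0 1 x * x ^ j) := fun j =>
    (integrable_gaussianReal_iff one_ne_zero).mp (integrable_pow_gaussianReal 0 1 j)
  have hderiv : ∀ x, HasDerivAt (fun x => x ^ (k + 1) * gaussianPDFReal 0 1 x)
      ((k + 1) * (gaussianPDFReal 0 1 x * x ^ k) - gaussianPDFReal 0 1 x * x ^ (k + 2)) x := by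
    intro x
    refine ((hasDerivAt_pow (k + 1) x).mul (hasDerivAt_gaussianPDFReal 0 1 x)).congr_deriv ?_
    simp only [Nat.add_sub_cancel, sub_zero, NNReal.coe_one, div_one]
    push_cast
    ring
  have h := integral_eq_zero_of_hasDerivAt_of_integrable hderiv
    (((hint k).const_mul _).sub (hint (k + 2))) (by simpa only [mul_comm] using hint (k + 1))
  rw [integral_sub ((hint k).const_mul _) (hint (k + 2)), integral_const_mul, sub_eq_zero] at h
  simp only [integral_gaussianReal_eq_integral_smul one_ne_zero, smul_eq_mul, h]

lemma integral_sq_gaussianReal : ∫ x, x ^ 2 ∂gaussianReal 0 1 = 1 := by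
  simpa using integral_pow_add_two_gaussianReal 0

lemma integral_pow_three_gaussianReal : ∫ x, x ^ 3 ∂gaussianReal 0 1 = 0 := by
  simpa using integral_pow_add_two_gaussianReal 1

lemma integral_pow_four_gaussianReal : ∫ x, x ^ 4 ∂gaussianReal 0 1 = 3 := by
  rw [integral_pow_add_two_gaussianReal 2, integral_sq_gaussianReal]
  norm_num

lemma HasLaw.of_map_eq {Ω 𝓧 : Type*} [MeasurableSpace Ω] [MeasurableSpace 𝓧] {P : Measure Ω}
    {ν : Measure 𝓧} [NeZero ν] {X : Ω → 𝓧} (h : P.map X = ν) : HasLaw X ν P :=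
  ⟨.of_map_ne_zero (h ▸ NeZero.ne ν), h⟩

lemma HasLaw.memLp_comp {Ω 𝓧 : Type*} [MeasurableSpace Ω] [MeasurableSpace 𝓧]
    {P : Measure Ω} {ν : Measure 𝓧} {X : Ω → 𝓧} (hX : HasLaw X ν P) {f : 𝓧 → ℝ}
    {p : ENNReal} (hf : MemLp f p ν) : MemLp (f ∘ X) p P := by
  rw [← hX.map_eq] at hf
  exact (memLp_map_measure_iff hf.aestronglyMeasurable hX.aemeasurable).mp hf

lemma iIndepFun.hasLaw_prodMk_prodMk {Ω ι E : Type*} [MeasurableSpace Ω] [MeasurableSpace E]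
    {P : Measure Ω} [IsProbabilityMeasure P] {f : ι → Ω → E} {ν : ι → Measure E}
    [∀ i, IsProbabilityMeasure (ν i)] (hf : iIndepFun f P) (hlaw : ∀ i, HasLaw (f i) (ν i) P)
    {i j k : ι} (hij : i ≠ j) (hik : i ≠ k) (hjk : j ≠ k) :
    HasLaw (fun ω => ((f i ω, f j ω), f k ω)) (((ν i).prod (ν j)).prod (ν k)) P :=
  (hf.indepFun_prodMk₀ (fun l => (hlaw l).aemeasurable) i j k hik hjk).hasLaw_prod
    ((hf.indepFun hij).hasLaw_prod (hlaw i) (hlaw j)) (hlaw k)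

end ProbabilityTheory

lemma integral_sq_sum_of_orthogonal {ι Ω : Type*} [Fintype ι] [MeasurableSpace Ω]
    {μ : Measure Ω} {X : ι → Ω → ℝ} {c : ℝ} (hX : ∀ i, MemLp (X i) 2 μ)
    (hsq : ∀ i, ∫ ω, X i ω ^ 2 ∂μ = c) (horth : ∀ i j, i ≠ j → ∫ ω, X i ω * X j ω ∂μ = 0)
    (a : ι → ℝ) :
    ∫ ω, (∑ i, a i * X i ω) ^ 2 ∂μ = c * ∑ i, a i ^ 2 := by
  classical
  have hint : ∀ i j, Integrable (fun ω => a i * a j * (X i ω * X j ω)) μ := fun i j =>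
    ((hX i).integrable_mul (hX j)).const_mul _
  have hcov : ∀ i j, ∫ ω, X i ω * X j ω ∂μ = if i = j then c else 0 := by
    intro i j
    split_ifs with h
    · subst h
      simpa only [sq] using hsq i
    · exact horth i j h
  calc ∫ ω, (∑ i, a i * X i ω) ^ 2 ∂μ
      = ∫ ω, ∑ i, ∑ j, a i * a j * (X i ω * X j ω) ∂μ := by
        congr 1
        ext ω
        rw [sq, sum_mul_sum]
        exact sum_congr rfl fun i _ => sum_congr rfl fun j _ => by ring
    _ = ∑ i, ∑ j, a i * a j * ∫ ω, X i ω * X j ω ∂μ := by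
        rw [integral_finsetSum _ fun i _ => integrable_finsetSum _ fun j _ => hint i j]
        refine sum_congr rfl fun i _ => ?_
        rw [integral_finsetSum _ fun j _ => hint i j]
        exact sum_congr rfl fun j _ => integral_const_mul _ _
    _ = c * ∑ i, a i ^ 2 := by
        simp only [hcov, mul_ite, mul_zero, sum_ite_eq, mem_univ, if_true, mul_sum]
        exact sum_congr rfl fun i _ => by ring

instance (n : ℕ) : IsProbabilityMeasure (stdGaussian n) := by
  unfold _root_.stdGaussian
  infer_instance

lemma measurePreserving_cons_stdGaussian (n : ℕ) :
    MeasurePreserving (MeasurableEquiv.piFinSuccAbove (fun _ => ℝ) 0).symm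
      ((gaussianReal 0 1).prod (stdGaussian n)) (stdGaussian (n + 1)) :=
  (measurePreserving_piFinSuccAbove (fun _ => gaussianReal 0 1) 0).symm

lemma piFinSuccAbove_zero_symm_apply {n : ℕ} (p : ℝ × (Fin n → ℝ)) :
    (MeasurableEquiv.piFinSuccAbove (fun _ => ℝ) 0).symm p = Fin.cons p.1 p.2 := by
  simp [MeasurableEquiv.piFinSuccAbove, Fin.consEquiv]

noncomputable def mixedMoment (n k l : ℕ) (y : Fin n → ℝ) : ℝ :=
  ∫ x, (y ⬝ᵥ x) ^ k * (x ⬝ᵥ x) ^ l ∂stdGaussian n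

section MixedMoments

variable {n : ℕ}

-- `Matrix.cons_dotProduct_cons` uses `vecCons`, which `rw` does not match with `Fin.cons`.
lemma Fin.cons_dotProduct_cons (a b : ℝ) (x y : Fin n → ℝ) :
    (Fin.cons a x : Fin (n + 1) → ℝ) ⬝ᵥ Fin.cons b y = a * b + x ⬝ᵥ y :=
  Matrix.cons_dotProduct_cons a x b y

lemma cons_dotProduct_cons_pow_mul_pow (c t : ℝ) (y x : Fin n → ℝ) (k l : ℕ) :
    ((Fin.cons c y : Fin (n + 1) → ℝ) ⬝ᵥ Fin.cons t x) ^ k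
        * ((Fin.cons t x : Fin (n + 1) → ℝ) ⬝ᵥ Fin.cons t x) ^ l
      = ∑ j ∈ range (k + 1), ∑ m ∈ range (l + 1), (k.choose j * l.choose m * c ^ j)
          * (t ^ (j + 2 * m) * ((y ⬝ᵥ x) ^ (k - j) * (x ⬝ᵥ x) ^ (l - m))) := by
  rw [Fin.cons_dotProduct_cons, Fin.cons_dotProduct_cons, add_pow, add_pow, sum_mul_sum]
  refine sum_congr rfl fun j _ => sum_congr rfl fun m _ => ?_
  ring

lemma integrable_dotProduct_pow_mul_pow (y : Fin n → ℝ) (k l : ℕ) :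
    Integrable (fun x => (y ⬝ᵥ x) ^ k * (x ⬝ᵥ x) ^ l) (stdGaussian n) := by
  induction n generalizing k l with
  | zero => simp [dotProduct]
  | succ n ih =>
    induction y using Fin.consCases with | cons c y =>
    rw [← (measurePreserving_cons_stdGaussian n).integrable_comp_emb
      (MeasurableEquiv.measurableEmbedding _)]
    simp only [Function.comp_def, piFinSuccAbove_zero_symm_apply,
      cons_dotProduct_cons_pow_mul_pow]
    exact integrable_finsetSum _ fun j _ => integrable_finsetSum _ fun m _ =>
      ((integrable_pow_gaussianReal 0 1 _).mul_prod (ih y _ _)).const_mul _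

lemma integrable_dotProduct_self_pow (l : ℕ) :
    Integrable (fun x : Fin n → ℝ => (x ⬝ᵥ x) ^ l) (stdGaussian n) := by
  simpa using integrable_dotProduct_pow_mul_pow 0 0 l

lemma mixedMoment_cons (c : ℝ) (y : Fin n → ℝ) (k l : ℕ) :
    mixedMoment (n + 1) k l (Fin.cons c y)
      = ∑ j ∈ range (k + 1), ∑ m ∈ range (l + 1), (k.choose j * l.choose m * c ^ j)
          * ((∫ t, t ^ (j + 2 * m) ∂gaussianReal 0 1) * mixedMoment n (k - j) (l - m) y) := by
  have hint : ∀ j m, Integrable (fun p : ℝ × (Fin n → ℝ) =>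
      p.1 ^ (j + 2 * m) * ((y ⬝ᵥ p.2) ^ (k - j) * (p.2 ⬝ᵥ p.2) ^ (l - m)))
      ((gaussianReal 0 1).prod (stdGaussian n)) := fun j m =>
    (integrable_pow_gaussianReal 0 1 _).mul_prod (integrable_dotProduct_pow_mul_pow y _ _)
  rw [mixedMoment, ← (measurePreserving_cons_stdGaussian n).integral_comp']
  simp only [piFinSuccAbove_zero_symm_apply, cons_dotProduct_cons_pow_mul_pow]
  rw [integral_finsetSum _ fun j _ => integrable_finsetSum _ fun m _ => (hint j m).const_mul _]
  refine sum_congr rfl fun j _ => ?_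
  rw [integral_finsetSum _ fun m _ => (hint j m).const_mul _]
  refine sum_congr rfl fun m _ => ?_
  rw [integral_const_mul, mixedMoment,
    ← integral_prod_mul (fun t : ℝ => t ^ (j + 2 * m))
      (fun x => (y ⬝ᵥ x) ^ (k - j) * (x ⬝ᵥ x) ^ (l - m))]

lemma mixedMoment_zero_zero (y : Fin n → ℝ) : mixedMoment n 0 0 y = 1 := by
  simp [mixedMoment]

lemma mixedMoment_two_zero (y : Fin n → ℝ) : mixedMoment n 2 0 y = y ⬝ᵥ y := by
  induction n with
  | zero => simp [mixedMoment, dotProduct]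
  | succ n ih =>
    induction y using Fin.consCases with | cons c y =>
    simp [mixedMoment_cons, sum_range_succ, ih, mixedMoment_zero_zero, integral_sq_gaussianReal,
      integral_id_gaussianReal, Fin.cons_dotProduct_cons]
    ring

lemma mixedMoment_four_zero (y : Fin n → ℝ) : mixedMoment n 4 0 y = 3 * (y ⬝ᵥ y) ^ 2 := by
  induction n with
  | zero => simp [mixedMoment, dotProduct]
  | succ n ih =>
    induction y using Fin.consCases with | cons c y =>
    simp [mixedMoment_cons, sum_range_succ, ih, mixedMoment_zero_zero, mixedMoment_two_zero,
      integral_sq_gaussianReal, integral_pow_three_gaussianReal, integral_pow_four_gaussianReal,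
      integral_id_gaussianReal, Fin.cons_dotProduct_cons, Nat.choose]
    ring

lemma mixedMoment_zero_one (y : Fin n → ℝ) : mixedMoment n 0 1 y = n := by
  induction n with
  | zero => simp [mixedMoment, dotProduct]
  | succ n ih =>
    induction y using Fin.consCases with | cons c y =>
    simp [mixedMoment_cons, sum_range_succ, ih, mixedMoment_zero_zero, integral_sq_gaussianReal]

lemma mixedMoment_zero_two (y : Fin n → ℝ) : mixedMoment n 0 2 y = n ^ 2 + 2 * n := by
  induction n with
  | zero => simp [mixedMoment, dotProduct]
  | succ n ih =>
    induction y using Fin.consCases with | cons c y =>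
    simp [mixedMoment_cons, sum_range_succ, ih, mixedMoment_zero_zero, mixedMoment_zero_one,
      integral_sq_gaussianReal, integral_pow_four_gaussianReal]
    ring

lemma mixedMoment_two_one (y : Fin n → ℝ) : mixedMoment n 2 1 y = (n + 2) * (y ⬝ᵥ y) := by
  induction n with
  | zero => simp [mixedMoment, dotProduct]
  | succ n ih =>
    induction y using Fin.consCases with | cons c y =>
    simp [mixedMoment_cons, sum_range_succ, ih, mixedMoment_zero_zero, mixedMoment_zero_one,
      mixedMoment_two_zero, integral_sq_gaussianReal, integral_pow_three_gaussianReal,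
      integral_pow_four_gaussianReal, integral_id_gaussianReal, Fin.cons_dotProduct_cons]
    ring

end MixedMoments

section Psi

variable {n : ℕ}

lemma psi_eq_dotProduct (x z : Fin n → ℝ) :
    psi n x z = (z ⬝ᵥ x) ^ 2 / n - (x ⬝ᵥ x) * (z ⬝ᵥ z) / n ^ 2 := by
  rw [dotProduct_comm]
  rfl

lemma integral_psi_left (hn : n ≠ 0) (z : Fin n → ℝ) : ∫ x, psi n x z ∂stdGaussian n = 0 := by
  have h : (fun x => psi n x z) = fun x => (n : ℝ)⁻¹ * ((z ⬝ᵥ x) ^ 2 * (x ⬝ᵥ x) ^ 0)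
      - (z ⬝ᵥ z / n ^ 2) * ((z ⬝ᵥ x) ^ 0 * (x ⬝ᵥ x) ^ 1) := by
    ext x
    rw [psi_eq_dotProduct]
    ring
  rw [h, integral_sub ((integrable_dotProduct_pow_mul_pow z 2 0).const_mul _)
    ((integrable_dotProduct_pow_mul_pow z 0 1).const_mul _), integral_const_mul,
    integral_const_mul, ← mixedMoment, ← mixedMoment, mixedMoment_two_zero, mixedMoment_zero_one]
  field_simp
  ring

lemma integral_psi_sq_left (hn : n ≠ 0) (z : Fin n → ℝ) :
    ∫ x, psi n x z ^ 2 ∂stdGaussian n = 2 * (n - 1) / n ^ 3 * (z ⬝ᵥ z) ^ 2 := by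
  have h : (fun x => psi n x z ^ 2) = fun x => ((n : ℝ) ^ 2)⁻¹ * ((z ⬝ᵥ x) ^ 4 * (x ⬝ᵥ x) ^ 0)
      - (2 * (z ⬝ᵥ z) / n ^ 3) * ((z ⬝ᵥ x) ^ 2 * (x ⬝ᵥ x) ^ 1)
      + ((z ⬝ᵥ z) ^ 2 / n ^ 4) * ((z ⬝ᵥ x) ^ 0 * (x ⬝ᵥ x) ^ 2) := by
    ext x
    rw [psi_eq_dotProduct]
    field_simp
    ring
  have I := fun k l c => (integrable_dotProduct_pow_mul_pow z k l).const_mul c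
  rw [h, integral_add ?_ (I 0 2 _), integral_sub (I 4 0 _) (I 2 1 _),
    integral_const_mul, integral_const_mul, integral_const_mul, ← mixedMoment, ← mixedMoment,
    ← mixedMoment, mixedMoment_four_zero, mixedMoment_two_one, mixedMoment_zero_two]
  · field_simp
    ring
  · exact (I 4 0 _).sub (I 2 1 _)

lemma abs_psi_le (x z : Fin n → ℝ) : |psi n x z| ≤ (x ⬝ᵥ x) * (z ⬝ᵥ z) / n := by
  rcases n.eq_zero_or_pos with rfl | hn
  · simp [psi]
  have hn1 : (1 : ℝ) ≤ n := by exact_mod_cast hn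
  have hCS : (z ⬝ᵥ x) ^ 2 ≤ (x ⬝ᵥ x) * (z ⬝ᵥ z) := by
    rw [mul_comm]
    simpa only [dotProduct, sq] using sum_mul_sq_le_sq_mul_sq univ z x
  have hb : 0 ≤ (x ⬝ᵥ x) * (z ⬝ᵥ z) :=
    mul_nonneg (by simpa using dotProduct_self_star_nonneg x)
      (by simpa using dotProduct_self_star_nonneg z)
  rw [psi_eq_dotProduct, abs_sub_le_iff]
  constructor
  · have : 0 ≤ (x ⬝ᵥ x) * (z ⬝ᵥ z) / (n : ℝ) ^ 2 := by positivity
    linarith [div_le_div_of_nonneg_right hCS (by positivity : (0 : ℝ) ≤ n)]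
  · have : 0 ≤ (z ⬝ᵥ x) ^ 2 / (n : ℝ) := by positivity
    linarith [div_le_div_of_nonneg_left hb (by positivity) (by nlinarith : (n : ℝ) ≤ n ^ 2)]

lemma continuous_psi : Continuous fun q : (Fin n → ℝ) × (Fin n → ℝ) => psi n q.1 q.2 := by
  unfold psi
  fun_prop

lemma continuous_psi_mul_psi :
    Continuous fun q : ((Fin n → ℝ) × (Fin n → ℝ)) × (Fin n → ℝ) =>
      psi n q.1.1 q.2 * psi n q.1.2 q.2 :=
  (continuous_psi.comp (continuous_fst.fst.prodMk continuous_snd)).mul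
    (continuous_psi.comp (continuous_fst.snd.prodMk continuous_snd))

lemma integrable_psi_sq_prod :
    Integrable (fun q => psi n q.1 q.2 ^ 2) ((stdGaussian n).prod (stdGaussian n)) := by
  refine (((integrable_dotProduct_self_pow 2).mul_prod (integrable_dotProduct_self_pow 2)).div_const
    ((n : ℝ) ^ 2)).mono' (continuous_psi.pow 2).aestronglyMeasurable (ae_of_all _ fun q => ?_)
  calc ‖psi n q.1 q.2 ^ 2‖ = |psi n q.1 q.2| ^ 2 := by rw [norm_pow, Real.norm_eq_abs]
    _ ≤ ((q.1 ⬝ᵥ q.1) * (q.2 ⬝ᵥ q.2) / n) ^ 2 := by gcongr; exact abs_psi_le _ _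
    _ = (q.1 ⬝ᵥ q.1) ^ 2 * (q.2 ⬝ᵥ q.2) ^ 2 / n ^ 2 := by ring

lemma memLp_psi_prod :
    MemLp (fun q => psi n q.1 q.2) 2 ((stdGaussian n).prod (stdGaussian n)) :=
  (memLp_two_iff_integrable_sq continuous_psi.aestronglyMeasurable).2 integrable_psi_sq_prod

lemma integrable_psi_mul_psi_prod :
    Integrable (fun q => psi n q.1.1 q.2 * psi n q.1.2 q.2)
      (((stdGaussian n).prod (stdGaussian n)).prod (stdGaussian n)) := by
  have hbound : Integrable (fun q : ((Fin n → ℝ) × (Fin n → ℝ)) × (Fin n → ℝ) =>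
      (q.1.1 ⬝ᵥ q.1.1) ^ 1 * (q.1.2 ⬝ᵥ q.1.2) ^ 1 * (q.2 ⬝ᵥ q.2) ^ 2 / n ^ 2)
      (((stdGaussian n).prod (stdGaussian n)).prod (stdGaussian n)) :=
    (((integrable_dotProduct_self_pow 1).mul_prod (integrable_dotProduct_self_pow 1)).mul_prod
      (integrable_dotProduct_self_pow 2)).div_const _
  refine hbound.mono' continuous_psi_mul_psi.aestronglyMeasurable (ae_of_all _ fun q => ?_)
  calc ‖psi n q.1.1 q.2 * psi n q.1.2 q.2‖ = |psi n q.1.1 q.2| * |psi n q.1.2 q.2| := by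
        rw [norm_mul, Real.norm_eq_abs, Real.norm_eq_abs]
    _ ≤ ((q.1.1 ⬝ᵥ q.1.1) * (q.2 ⬝ᵥ q.2) / n) * ((q.1.2 ⬝ᵥ q.1.2) * (q.2 ⬝ᵥ q.2) / n) :=
        mul_le_mul (abs_psi_le _ _) (abs_psi_le _ _) (abs_nonneg _)
          ((abs_nonneg _).trans (abs_psi_le _ _))
    _ = (q.1.1 ⬝ᵥ q.1.1) ^ 1 * (q.1.2 ⬝ᵥ q.1.2) ^ 1 * (q.2 ⬝ᵥ q.2) ^ 2 / n ^ 2 := by ring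

lemma integral_psi_sq_prod (hn : n ≠ 0) :
    ∫ q, psi n q.1 q.2 ^ 2 ∂(stdGaussian n).prod (stdGaussian n)
      = 2 * (n - 1) * (n + 2) / n ^ 2 := by
  have hsq : ∫ z, (z ⬝ᵥ z) ^ 2 ∂stdGaussian n = n ^ 2 + 2 * n := by
    simpa [mixedMoment] using mixedMoment_zero_two (0 : Fin n → ℝ)
  rw [integral_prod_symm _ integrable_psi_sq_prod]
  simp only [integral_psi_sq_left hn, integral_const_mul, hsq]
  field_simp

lemma integral_psi_mul_psi_prod (hn : n ≠ 0) :
    ∫ q, psi n q.1.1 q.2 * psi n q.1.2 q.2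
      ∂((stdGaussian n).prod (stdGaussian n)).prod (stdGaussian n) = 0 := by
  rw [integral_prod_symm _ integrable_psi_mul_psi_prod]
  refine integral_eq_zero_of_ae (ae_of_all _ fun z => ?_)
  simpa [integral_psi_left hn] using integral_prod_mul (μ := stdGaussian n) (ν := stdGaussian n)
    (fun x => psi n x z) (fun y => psi n y z)

end Psi

theorem second_moment_weighted_sum_psi_general {Ω : Type*} [MeasurableSpace Ω] (μ : Measure Ω)
    [IsProbabilityMeasure μ]
    (n m : ℕ) (hn : 1 ≤ n)
    (a : Fin m → ℝ) (u : Fin m → Ω → (Fin n → ℝ)) (v : Ω → (Fin n → ℝ))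
    (hindep : iIndepFun
      (Fin.snoc (α := fun _ : Fin (m + 1) => Ω → (Fin n → ℝ)) u v) μ)
    (hud : ∀ i, Measure.map (u i) μ = stdGaussian n)
    (hvd : Measure.map v μ = stdGaussian n) :
    ∫ ω, (∑ i, a i * psi n (u i ω) (v ω)) ^ 2 ∂μ
      = (2 * ((n : ℝ) - 1) * ((n : ℝ) + 2) / n ^ 2) * ∑ i, (a i) ^ 2 := by
  have hn0 : n ≠ 0 := by omega
  have hlaw : ∀ k, HasLaw (Fin.snoc (α := fun _ => Ω → (Fin n → ℝ)) u v k) (stdGaussian n) μ :=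
    Fin.lastCases (by simpa using HasLaw.of_map_eq hvd)
      fun i => by simpa using HasLaw.of_map_eq (hud i)
  have hUV : ∀ i, HasLaw (fun ω => (u i ω, v ω)) ((stdGaussian n).prod (stdGaussian n)) μ :=
    fun i => by
      simpa using (hindep.indepFun (Fin.castSucc_lt_last i).ne).hasLaw_prod (hlaw _) (hlaw _)
  have hUUV : ∀ i j, i ≠ j → HasLaw (fun ω => ((u i ω, u j ω), v ω))
      (((stdGaussian n).prod (stdGaussian n)).prod (stdGaussian n)) μ := fun i j hij => by
    simpa using hindep.hasLaw_prodMk_prodMk hlaw ((Fin.castSucc_injective m).ne hij)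
      (Fin.castSucc_lt_last i).ne (Fin.castSucc_lt_last j).ne
  refine integral_sq_sum_of_orthogonal (fun i => (hUV i).memLp_comp memLp_psi_prod)
    (fun i => ?_) (fun i j hij => ?_) a
  · exact ((hUV i).integral_comp (continuous_psi.pow 2).aestronglyMeasurable).trans
      (integral_psi_sq_prod hn0)
  · exact ((hUUV i j hij).integral_comp continuous_psi_mul_psi.aestronglyMeasurable).trans
      (integral_psi_mul_psi_prod hn0)

/-- If `u₁, …, u_m, v` are independent standard `n`-dimensional Gaussian vectors, then
`E[(Σᵢ aᵢ ψ(uᵢ, v))²] = (2(n−1)(n+2)/n²) Σᵢ aᵢ²`. -/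
theorem second_moment_weighted_sum_psi {Ω : Type*} [MeasurableSpace Ω] (μ : Measure Ω)
    [IsProbabilityMeasure μ]
    (n m : ℕ) (hn : 1 ≤ n) (hm : 1 ≤ m)
    (a : Fin m → ℝ) (u : Fin m → Ω → (Fin n → ℝ)) (v : Ω → (Fin n → ℝ))
    (hu : ∀ i, Measurable (u i)) (hv : Measurable v)
    (hindep : iIndepFun
      (Fin.snoc (α := fun _ : Fin (m + 1) => Ω → (Fin n → ℝ)) u v) μ)
    (hud : ∀ i, Measure.map (u i) μ = stdGaussian n)
    (hvd : Measure.map v μ = stdGaussian n) :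
    ∫ ω, (∑ i, a i * psi n (u i ω) (v ω)) ^ 2 ∂μ
      = (2 * ((n : ℝ) - 1) * ((n : ℝ) + 2) / n ^ 2) * ∑ i, (a i) ^ 2 :=
  second_moment_weighted_sum_psi_general μ n m hn a u v hindep hud hvd
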